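/- arXiv:1108.3357 — 2 statements merged into one kernel-verified Lean document; each statement's English description precedes it below -/
import Mathlib

section
/- Fix 0 < q < 1 and integers n ≥ 1, m ≥ 2, N = n + m. Define the Jackson-type integral ∫₁^∞ f(x) d_{q^{-2}}x = (q^{-2} − 1) Σ_{k=0}^∞ f(q^{-2k}) q^{-2k} and the weight ρ(x) = const₂ · x^{m−1}(q^{-2}x − 1)(q^{-4}x − 1)⋯(q^{-2(n−1)}x − 1) with const₂ = (1/(q^{-2}−1)) ∏_{j=1}^{n−1} 1/(q^{-2j}−1). Then for every finitely supported function f on q^{-2ℤ₊}, the double sum const₁ · Σ_{i₁,…,i_n ∈ −ℤ₊, i_{n+1},…,i_{N−1} ∈ ℕ} f(q^{2(i₁+⋯+i_n)}) q^{2(N−1)i₁ + 2(N−2)i₂ + ⋯ + 2i_{N−1}}, with const₁ = ∏_{j=1}^{m−1}(q^{-2j} − 1), equals ∫₁^∞ f(x) ρ(x) d_{q^{-2}}x. -/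
/-!
Write `Q = q^{-2}`. The sum splits into a sum over `(i₁, …, i_n)` times a sum over
`(i_{n+1}, …, i_{N-1})`. The latter is a product of geometric series with value
`∏_{j=1}^{m-1} (Q^j - 1)⁻¹`, which cancels `const₁`. Grouping the former by
`k = -(i₁ + ⋯ + i_n)` gives `∑_k f(Q^k) Q^{mk} [n-1+k choose k]_Q`, where the Gaussian binomial
coefficient appears as the weighted count `∑_{a₁+⋯+a_n=k} Q^{∑ (n-1-l) a_l}`. The `q`-Pascal rule
gives its product formula `∏_{j=1}^{n-1} (Q^{j+k} - 1)/(Q^j - 1)`, and `Q^{mk}` times this is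
exactly `(Q - 1) ρ(Q^k) Q^k`.
-/

/-- The weight `ρ(x) = const₂ · x^{m−1}(q^{-2}x − 1)⋯(q^{-2(n−1)}x − 1)` with
`const₂ = (1/(q^{-2}−1)) ∏_{j=1}^{n−1} 1/(q^{-2j}−1)`. -/
noncomputable def rhoWeight (q : ℝ) (n m : ℕ) (x : ℝ) : ℝ :=
  ((1 / (q ^ (-2 : ℤ) - 1)) * ∏ j ∈ Finset.range (n - 1), (1 / (q ^ (-2 * ((j : ℤ) + 1)) - 1)))
    * x ^ (m - 1) * ∏ j ∈ Finset.range (n - 1), (q ^ (-2 * ((j : ℤ) + 1)) * x - 1)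

open Finset

section QBinom

variable {R : Type*}

noncomputable def qBinomSum [CommSemiring R] (Q : R) (n k : ℕ) : R :=
  ∑ a ∈ Nat.antidiagonalTuple n k, Q ^ ∑ l : Fin n, (n - 1 - l) * a l

theorem qBinomSum_zero_right [CommSemiring R] (Q : R) (n : ℕ) : qBinomSum Q n 0 = 1 := by
  simp [qBinomSum, Nat.antidiagonalTuple_zero_right]

theorem qBinomSum_one [CommSemiring R] (Q : R) (k : ℕ) : qBinomSum Q 1 k = 1 := by
  simp [qBinomSum, Nat.antidiagonalTuple_one]

theorem qBinomSum_succ [CommSemiring R] (Q : R) (n k : ℕ) :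
    qBinomSum Q (n + 1) k = ∑ ij ∈ antidiagonal k, Q ^ (n * ij.1) * qBinomSum Q n ij.2 := by
  simp_rw [qBinomSum, mul_sum]
  rw [sum_sigma']
  refine sum_nbij' (fun a => ⟨(a 0, ∑ l : Fin n, a l.succ), Fin.tail a⟩)
    (fun z => Fin.cons z.1.1 z.2) ?_ ?_ (fun a _ => Fin.cons_self_tail a) ?_ ?_
  · intro a ha
    rw [Nat.mem_antidiagonalTuple, Fin.sum_univ_succ] at ha
    simpa [Nat.mem_antidiagonalTuple, Fin.tail] using ha
  · rintro ⟨⟨i, j⟩, b⟩ hz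
    simp only [mem_sigma, HasAntidiagonal.mem_antidiagonal, Nat.mem_antidiagonalTuple] at hz ⊢
    rw [Fin.sum_univ_succ]
    simpa [hz.2] using hz.1
  · rintro ⟨⟨i, j⟩, b⟩ hz
    simp only [mem_sigma, HasAntidiagonal.mem_antidiagonal, Nat.mem_antidiagonalTuple] at hz
    simp [hz.2]
  · intro a _
    rw [Fin.sum_univ_succ, pow_add]
    congr 2
    refine sum_congr rfl fun l _ => ?_
    simp only [Fin.tail, Fin.val_succ]
    congr 1
    omega

theorem qBinomSum_succ_succ [CommSemiring R] (Q : R) (n k : ℕ) :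
    qBinomSum Q (n + 1) (k + 1) = qBinomSum Q n (k + 1) + Q ^ n * qBinomSum Q (n + 1) k := by
  rw [qBinomSum_succ, Nat.antidiagonal_succ, sum_cons, sum_map, qBinomSum_succ, mul_sum]
  congr 1
  · simp
  · refine sum_congr rfl fun ij _ => ?_
    simp only [Function.Embedding.coe_prodMap, Function.Embedding.coeFn_mk,
      Function.Embedding.refl_apply, Prod.map_fst, Prod.map_snd]
    rw [Nat.mul_succ, pow_add]
    ring

theorem qBinomSum_mul_prod [CommRing R] (Q : R) (n k : ℕ) :
    qBinomSum Q (n + 1) k * ∏ j ∈ range n, (Q ^ (j + 1) - 1) =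
      ∏ j ∈ range n, (Q ^ (j + 1 + k) - 1) := by
  induction n generalizing k with
  | zero => simp [qBinomSum_one]
  | succ n ih =>
    induction k with
    | zero => simp [qBinomSum_zero_right]
    | succ k ihk =>
      rw [qBinomSum_succ_succ, prod_range_succ, prod_range_succ]
      rw [prod_range_succ, prod_range_succ' (fun j => Q ^ (j + 1 + k) - 1)] at ihk
      simp only [show ∀ j, j + 1 + 1 + k = j + 1 + (k + 1) by omega, zero_add] at ihk
      linear_combination (Q ^ (n + 1) - 1) * ih (k + 1) + Q ^ (n + 1) * ihk

end QBinom

theorem hasSum_mul_comp_sum {R : Type*} [NonUnitalNonAssocSemiring R] [TopologicalSpace R]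
    {n : ℕ} (g : ℕ → R) (hg : g.support.Finite) (w : (Fin n → ℕ) → R) :
    HasSum (fun a : Fin n → ℕ => g (∑ l, a l) * w a)
      (∑' k, g k * ∑ a ∈ Nat.antidiagonalTuple n k, w a) := by
  classical
  have hS : ∀ k ∉ hg.toFinset, g k = 0 := fun k hk => by simpa using hk
  have hdisj : (hg.toFinset : Set ℕ).PairwiseDisjoint (Nat.antidiagonalTuple n) :=
    fun k _ k' _ hkk' => disjoint_left.2 fun a h h' =>
      hkk' ((Nat.mem_antidiagonalTuple.1 h).symm.trans (Nat.mem_antidiagonalTuple.1 h'))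
  have hzero : ∀ a ∉ hg.toFinset.biUnion (Nat.antidiagonalTuple n), g (∑ l, a l) * w a = 0 :=
    fun a ha => by
      rw [hS _ fun hk => ha (mem_biUnion.2 ⟨_, hk, Nat.mem_antidiagonalTuple.2 rfl⟩), zero_mul]
  have h := hasSum_sum_of_ne_finset_zero (L := SummationFilter.unconditional _) hzero
  rw [sum_biUnion hdisj] at h
  rw [tsum_eq_sum fun k hk => by rw [hS k hk, zero_mul]]
  convert h using 1
  refine sum_congr rfl fun k _ => ?_
  rw [mul_sum]
  exact sum_congr rfl fun a ha => by rw [Nat.mem_antidiagonalTuple.1 ha]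

theorem hasSum_fin_prod_of_nonneg {ι : Type*} {d : ℕ} {f : Fin d → ι → ℝ} {s : Fin d → ℝ}
    (hf : ∀ r, HasSum (f r) (s r)) (h0 : ∀ r i, 0 ≤ f r i) :
    HasSum (fun b : Fin d → ι => ∏ r, f r (b r)) (∏ r, s r) := by
  induction d with
  | zero => simp
  | succ d ih =>
    have htail := ih (fun r => hf r.succ) (fun r => h0 r.succ)
    have hhead_nonneg : 0 ≤ f 0 := h0 0
    have htail_nonneg : 0 ≤ fun b : Fin d → ι => ∏ r, f r.succ (b r) :=
      fun b => prod_nonneg fun r _ => h0 r.succ (b r)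
    have hsummable := (hf 0).summable.mul_of_nonneg htail.summable hhead_nonneg htail_nonneg
    have hmul := (hf 0).mul htail hsummable
    have hcons : (fun b : Fin (d + 1) → ι => ∏ r, f r (b r)) ∘ Fin.consEquiv (fun _ => ι) =
        fun p => f 0 p.1 * ∏ r : Fin d, f r.succ (p.2 r) := by
      ext p
      simp [Fin.consEquiv, Fin.prod_univ_succ]
    rw [← (Fin.consEquiv fun _ => ι).hasSum_iff, hcons, Fin.prod_univ_succ]
    exact hmul

theorem hasSum_inv_pow_succ {c : ℝ} (hc : 1 < c) :
    HasSum (fun k : ℕ => (c ^ (k + 1))⁻¹) (c - 1)⁻¹ := by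
  have hc0 : 0 < c := by linarith
  have h := (hasSum_geometric_of_lt_one (inv_nonneg.2 hc0.le) (inv_lt_one_of_one_lt₀ hc)).mul_left
    c⁻¹
  have hsum : c⁻¹ * (1 - c⁻¹)⁻¹ = (c - 1)⁻¹ := by field_simp
  simpa only [← inv_pow, ← pow_succ', hsum] using h

theorem Fin.prod_univ_sub_eq_prod_range_succ {M : Type*} [CommMonoid M] (g : ℕ → M) (d : ℕ) :
    ∏ r : Fin d, g (d - r) = ∏ j ∈ range d, g (j + 1) := by
  rw [Fin.prod_univ_eq_prod_range (fun i => g (d - i)), ← prod_range_reflect]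
  exact prod_congr rfl fun j hj => by rw [mem_range] at hj; congr 1; omega

theorem hasSum_inv_pow_weighted_tuple {Q : ℝ} (hQ : 1 < Q) (d : ℕ) :
    HasSum (fun b : Fin d → ℕ => (Q ^ ∑ r : Fin d, (d - r) * (b r + 1))⁻¹)
      (∏ j ∈ range d, (Q ^ (j + 1) - 1))⁻¹ := by
  have h := hasSum_fin_prod_of_nonneg (fun r : Fin d => hasSum_inv_pow_succ
    (one_lt_pow₀ hQ (by omega : d - (r : ℕ) ≠ 0))) fun r k => by positivity
  rw [Fin.prod_univ_sub_eq_prod_range_succ (fun j => (Q ^ j - 1)⁻¹), prod_inv_distrib] at h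
  convert h using 2 with b
  rw [← prod_pow_eq_pow_sum, ← prod_inv_distrib]
  simp only [pow_mul]

theorem zpow_neg_two_mul_natCast (q : ℝ) (k : ℕ) : q ^ (-2 * (k : ℤ)) = (q ^ (-2 : ℤ)) ^ k := by
  rw [zpow_mul, zpow_natCast]

theorem zpow_neg_two_mul_natCast_add_one (q : ℝ) (j : ℕ) :
    q ^ (-2 * ((j : ℤ) + 1)) = (q ^ (-2 : ℤ)) ^ (j + 1) := by
  exact_mod_cast zpow_neg_two_mul_natCast q (j + 1)

theorem one_lt_zpow_neg_two {q : ℝ} (hq : 0 < q) (hq1 : q < 1) : 1 < q ^ (-2 : ℤ) := by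
  rw [zpow_neg, one_lt_inv₀ (by positivity)]
  exact_mod_cast pow_lt_one₀ hq.le hq1 two_ne_zero

theorem hasSum_zpow_two_mul_sum {q : ℝ} (hq : 0 < q) (hq1 : q < 1) {m : ℕ} (hm : 1 ≤ m) :
    HasSum (fun b : Fin (m - 1) → ℕ =>
        q ^ ((2 : ℤ) * ∑ r : Fin (m - 1), ((m : ℤ) - 1 - (r : ℕ)) * (b r + 1)))
      (∏ j ∈ range (m - 1), (q ^ (-2 * ((j : ℤ) + 1)) - 1))⁻¹ := by
  simp only [zpow_neg_two_mul_natCast_add_one]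
  convert hasSum_inv_pow_weighted_tuple (one_lt_zpow_neg_two hq hq1) (m - 1) using 2 with b
  have hexp : ∑ r : Fin (m - 1), ((m : ℤ) - 1 - (r : ℕ)) * ((b r : ℤ) + 1) =
      ((∑ r : Fin (m - 1), (m - 1 - r) * (b r + 1) : ℕ) : ℤ) := by
    push_cast
    refine sum_congr rfl fun r _ => ?_
    have := r.isLt
    rw [Nat.cast_sub (by omega), Nat.cast_sub hm]
    push_cast
    ring
  rw [hexp, ← zpow_natCast, ← zpow_neg, ← zpow_mul, neg_mul_neg]

theorem sum_antidiagonalTuple_zpow_eq_qBinomSum (q : ℝ) (n m k : ℕ) :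
    ∑ a ∈ Nat.antidiagonalTuple n k,
        q ^ (-(2 : ℤ) * ∑ l : Fin n, (((n + m : ℕ) : ℤ) - 1 - (l : ℕ)) * a l) =
      (q ^ (-2 : ℤ)) ^ (m * k) * qBinomSum (q ^ (-2 : ℤ)) n k := by
  rw [qBinomSum, mul_sum]
  refine sum_congr rfl fun a ha => ?_
  have hexp : ∑ l : Fin n, (((n + m : ℕ) : ℤ) - 1 - (l : ℕ)) * a l =
      ((m * k + ∑ l : Fin n, (n - 1 - l) * a l : ℕ) : ℤ) := by
    rw [← Nat.mem_antidiagonalTuple.1 ha, mul_sum, ← sum_add_distrib]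
    push_cast
    refine sum_congr rfl fun l _ => ?_
    have := l.isLt
    rw [Nat.cast_sub (by omega), Nat.cast_sub (by omega)]
    push_cast
    ring
  rw [hexp, zpow_mul, zpow_natCast, pow_add]

theorem sub_one_mul_rhoWeight {q : ℝ} (hq : 0 < q) (hq1 : q < 1) {n m : ℕ} (hn : 1 ≤ n)
    (hm : 1 ≤ m) (k : ℕ) :
    (q ^ (-2 : ℤ) - 1) * rhoWeight q n m (q ^ (-2 * (k : ℤ))) * q ^ (-2 * (k : ℤ)) =
      (q ^ (-2 : ℤ)) ^ (m * k) * qBinomSum (q ^ (-2 : ℤ)) n k := by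
  obtain ⟨s, rfl⟩ : ∃ s, n = s + 1 := ⟨n - 1, by omega⟩
  obtain ⟨e, rfl⟩ : ∃ e, m = e + 1 := ⟨m - 1, by omega⟩
  simp only [rhoWeight, zpow_neg_two_mul_natCast, zpow_neg_two_mul_natCast_add_one,
    Nat.add_sub_cancel, one_div, prod_inv_distrib, ← pow_add]
  have hQ : 1 < q ^ (-2 : ℤ) := one_lt_zpow_neg_two hq hq1
  generalize q ^ (-2 : ℤ) = Q at hQ ⊢
  have hprod : ∏ j ∈ range s, (Q ^ (j + 1) - 1) ≠ 0 :=
    prod_ne_zero_iff.2 fun j _ => sub_ne_zero.2 (one_lt_pow₀ hQ (by omega)).ne'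
  rw [eq_div_of_mul_eq hprod (qBinomSum_mul_prod Q s k)]
  field_simp [(sub_pos.2 hQ).ne']
  ring

/-- `f k` stands for `f(q^{-2k})`; the tuple `p.1` lists `-i₁, …, -i_n` and `p.2` lists
`i_{n+1} - 1, …, i_{N-1} - 1`. -/
theorem stmt3 (q : ℝ) (hq : 0 < q) (hq1 : q < 1) (n m N : ℕ)
    (hn : 1 ≤ n) (hm : 2 ≤ m) (hN : N = n + m)
    (f : ℕ → ℝ) (hf : (Function.support f).Finite) :
    (∏ j ∈ Finset.range (m - 1), (q ^ (-2 * ((j : ℤ) + 1)) - 1)) *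
      ∑' p : (Fin n → ℕ) × (Fin (m - 1) → ℕ),
        f (∑ l, p.1 l) *
          q ^ (-(2 : ℤ) * ∑ l : Fin n, ((N : ℤ) - 1 - (l : ℕ)) * p.1 l) *
          q ^ ((2 : ℤ) * ∑ r : Fin (m - 1), ((m : ℤ) - 1 - (r : ℕ)) * (p.2 r + 1))
    = (q ^ (-2 : ℤ) - 1) *
        ∑' k : ℕ, f k * rhoWeight q n m (q ^ (-2 * (k : ℤ))) * q ^ (-2 * (k : ℤ)) := by
  subst hN
  have hF := hasSum_mul_comp_sum f hf fun a : Fin n → ℕ =>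
    q ^ (-(2 : ℤ) * ∑ l : Fin n, (((n + m : ℕ) : ℤ) - 1 - (l : ℕ)) * a l)
  have hG := hasSum_zpow_two_mul_sum hq hq1 (by omega : 1 ≤ m)
  have hC : ∏ j ∈ range (m - 1), (q ^ (-2 * ((j : ℤ) + 1)) - 1) ≠ 0 :=
    prod_ne_zero_iff.2 fun j _ => by
      rw [zpow_neg_two_mul_natCast_add_one]
      exact sub_ne_zero.2 (one_lt_pow₀ (one_lt_zpow_neg_two hq hq1) j.succ_ne_zero).ne'
  rw [← tsum_mul_tsum_of_summable_norm hF.summable.norm hG.summable.norm, hF.tsum_eq,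
    hG.tsum_eq, mul_left_comm, mul_inv_cancel₀ hC, mul_one, ← tsum_mul_left]
  refine tsum_congr fun k => ?_
  rw [sum_antidiagonalTuple_zpow_eq_qBinomSum, ← sub_one_mul_rhoWeight hq hq1 hn (by omega)]
  ring
end

section
/- Fix 0 < q < 1, integers n ≥ 1, m ≥ 2, N = n + m, and a parameter l ∈ ℂ. Define the operator □⁽⁰⁾ acting on functions f on the lattice q^{-2ℤ₊} ⊂ [1,∞) by (□⁽⁰⁾f)(x) = (q²/((1−q²)²x))·((x−1)q^{2m−2}f(q²x) + (q^{-2n}x − 1)f(q^{-2}x) + (1 + q^{2m−2} − q^{2m−2}x − q^{-2n}x)f(x)). Then the q-hypergeometric function Φ_l(x) = ₃Φ₂(x, q^{-2l}, q^{2(l+N−1)}; q^{2n}, 0; q², q²) satisfies □⁽⁰⁾Φ_l = λ(l)·Φ_l pointwise on q^{-2ℤ₊}, where λ(l) = −q^{2−2n}(1 − q^{-2l})(1 − q^{2l+2(N−1)})/(1 − q²)². -/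
/-- q-Pochhammer symbol `(a;x)_k = ∏_{i=0}^{k-1}(1 - a xⁱ)` in ℂ. -/
noncomputable def qpC (a x : ℂ) (k : ℕ) : ℂ := ∏ i ∈ Finset.range k, (1 - a * x ^ i)

/-- `Φ_l(q^{-2k}) = ₃Φ₂(q^{-2k}, q^{-2l}, q^{2(l+N−1)}; q^{2n}, 0; q², q²)`,
a terminating basic hypergeometric sum. -/
noncomputable def PhiFun (q : ℝ) (n N : ℕ) (l : ℂ) (k : ℕ) : ℂ :=
  ∑ i ∈ Finset.range (k + 1),
    qpC ((q : ℂ) ^ ((-2 : ℤ) * k)) ((q : ℂ) ^ 2) i *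
      qpC ((q : ℂ) ^ (-2 * l)) ((q : ℂ) ^ 2) i *
      qpC ((q : ℂ) ^ (2 * (l + (N : ℂ) - 1))) ((q : ℂ) ^ 2) i /
      (qpC ((q : ℂ) ^ 2) ((q : ℂ) ^ 2) i * qpC ((q : ℂ) ^ (2 * n)) ((q : ℂ) ^ 2) i) *
      ((q : ℂ) ^ 2) ^ i

/-!
Write `t = q²`, `a = q^{-2l}`, `b = q^{2(l+N-1)}`, `c = q^{2n}`, `x = t⁻ᵏ`, so that
`Φ(x) = ∑ᵢ (x;t)ᵢ Dᵢ tⁱ`.  Up to its prefactor, `□⁽⁰⁾` sends `(x;t)ᵢ₊₁` to `x` times a combination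
of `(x;t)ᵢ₊₁` and `(x;t)ᵢ`.  Collecting the coefficient of each `(x;t)ⱼ`, the eigenvalue equation
reduces to the ratio recurrence `Dᵢ₊₁ (1 - tⁱ⁺¹)(1 - c tⁱ) = Dᵢ (1 - a tⁱ)(1 - b tⁱ)` together with
`a b = c q^{2m-2}`, which is where `N = n + m` enters.  For a series truncated after `(x;t)_K` the
identity holds for every `x` up to one boundary term carrying `(x;t)_K`, and this term vanishes on
the lattice `x = t⁻ᵏ` once `K > k`.
-/
open Finset

lemma qpC_zero (a t : ℂ) : qpC a t 0 = 1 := prod_range_zero _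

lemma qpC_succ (a t : ℂ) (k : ℕ) : qpC a t (k + 1) = qpC a t k * (1 - a * t ^ k) :=
  prod_range_succ _ _

lemma qpC_succ' (a t : ℂ) (k : ℕ) : qpC a t (k + 1) = (1 - a) * qpC (a * t) t k := by
  rw [qpC, prod_range_succ', pow_zero, mul_one, mul_comm]
  exact congrArg _ (prod_congr rfl fun i _ => by ring)

lemma qpC_ne_zero {a t : ℂ} {k : ℕ} (h : ∀ j < k, a * t ^ j ≠ 1) : qpC a t k ≠ 0 :=
  prod_ne_zero_iff.2 fun j hj => sub_ne_zero.2 (h j (mem_range.1 hj)).symm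

lemma qpC_inv_pow_eq_zero {t : ℂ} (ht : t ≠ 0) {k i : ℕ} (h : k < i) : qpC (t ^ k)⁻¹ t i = 0 :=
  prod_eq_zero (mem_range.2 h) (by rw [inv_mul_cancel₀ (pow_ne_zero _ ht), sub_self])

/-- The coefficient of `(x;t)ᵢ zⁱ` in `₃Φ₂(x, a, b; c, 0; t, z)`. -/
noncomputable def qHypCoeff (a b c t : ℂ) (i : ℕ) : ℂ :=
  qpC a t i * qpC b t i / (qpC t t i * qpC c t i)

lemma qHypCoeff_succ_mul {a b c t : ℂ} (ht : ∀ j, t ^ (j + 1) ≠ 1) (hc : ∀ j, c * t ^ j ≠ 1)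
    (i : ℕ) :
    qHypCoeff a b c t (i + 1) * ((1 - t ^ (i + 1)) * (1 - c * t ^ i)) =
      qHypCoeff a b c t i * ((1 - a * t ^ i) * (1 - b * t ^ i)) := by
  have ht' : ∀ j, t * t ^ j ≠ 1 := fun j => by rw [← pow_succ']; exact ht j
  have h1 : qpC t t i ≠ 0 := qpC_ne_zero fun j _ => ht' j
  have h2 : qpC c t i ≠ 0 := qpC_ne_zero fun j _ => hc j
  have h3 : 1 - t ^ (i + 1) ≠ 0 := sub_ne_zero.2 (ht i).symm
  have h4 : 1 - c * t ^ i ≠ 0 := sub_ne_zero.2 (hc i).symm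
  simp only [qHypCoeff, qpC_succ, ← pow_succ']
  rw [div_mul_eq_mul_div, div_mul_eq_mul_div, div_eq_div_iff
    (mul_ne_zero (mul_ne_zero h1 h3) (mul_ne_zero h2 h4)) (mul_ne_zero h1 h2)]
  ring

noncomputable def qSeries (D : ℕ → ℂ) (t x : ℂ) (K : ℕ) : ℂ :=
  ∑ i ∈ range K, qpC x t i * D i * t ^ i

lemma qSeries_succ (D : ℕ → ℂ) (t x : ℂ) (K : ℕ) :
    qSeries D t x (K + 1) = qSeries D t x K + qpC x t K * D K * t ^ K :=
  sum_range_succ _ _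

lemma qSeries_inv_pow_of_lt (D : ℕ → ℂ) {t : ℂ} (ht : t ≠ 0) {k K : ℕ} (hK : k < K) :
    qSeries D t (t ^ k)⁻¹ K = qSeries D t (t ^ k)⁻¹ (k + 1) := by
  refine (sum_subset (range_subset_range.2 hK) fun i _ hi => ?_).symm
  rw [qpC_inv_pow_eq_zero ht (by simpa using hi), zero_mul, zero_mul]

section QDifference

variable {t a b c w : ℂ}

lemma qDifference_qpC_succ (ht : t ≠ 0) (x : ℂ) (j : ℕ) :
    t ^ (j + 1) * ((x - 1) * w * qpC (t * x) t (j + 1) + (c⁻¹ * x - 1) * qpC (x * t⁻¹) t (j + 1)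
        + (1 + w - w * x - c⁻¹ * x) * qpC x t (j + 1))
      = x * (1 - t ^ (j + 1)) * ((c⁻¹ - w * t ^ (j + 1)) * qpC x t (j + 1)
          + (t ^ j - c⁻¹) * qpC x t j) := by
  have h1 : (x - 1) * qpC (t * x) t (j + 1) =
      -(qpC x t j * (1 - x * t ^ j) * (1 - x * t ^ (j + 1))) := by
    rw [← qpC_succ, ← qpC_succ, qpC_succ' x t (j + 1), mul_comm x t]; ring
  have h2 : qpC (x * t⁻¹) t (j + 1) = (1 - x * t⁻¹) * qpC x t j := by
    rw [qpC_succ', inv_mul_cancel_right₀ ht]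
  rw [mul_right_comm, h1, h2, qpC_succ]
  field_simp
  ring

theorem qSeries_qDifference (D : ℕ → ℂ)
    (hD : ∀ i, D (i + 1) * ((1 - t ^ (i + 1)) * (1 - c * t ^ i)) =
      D i * ((1 - a * t ^ i) * (1 - b * t ^ i)))
    (hab : a * b = c * w) (ht : t ≠ 0) (hc : c ≠ 0) (x : ℂ) (K : ℕ) :
    (x - 1) * w * qSeries D t (t * x) (K + 1) + (c⁻¹ * x - 1) * qSeries D t (x * t⁻¹) (K + 1)
        + (1 + w - w * x - c⁻¹ * x) * qSeries D t x (K + 1)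
      = -(c⁻¹ * (1 - a) * (1 - b) * x) * qSeries D t x (K + 1)
        + c⁻¹ * x * D K * (1 - a * t ^ K) * (1 - b * t ^ K) * qpC x t K := by
  obtain rfl : w = c⁻¹ * (a * b) := by rw [hab, inv_mul_cancel_left₀ hc]
  induction K with
  | zero =>
    simp only [qSeries, zero_add, sum_range_one, qpC_zero, pow_zero]
    ring
  | succ K ih =>
    have step := qDifference_qpC_succ (w := c⁻¹ * (a * b)) (c := c) ht x K
    rw [qSeries_succ D t (t * x), qSeries_succ D t (x * t⁻¹), qSeries_succ D t x (K + 1)]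
    rw [qpC_succ x t K] at step ⊢
    linear_combination ih + D (K + 1) * step - (c⁻¹ * x * qpC x t K) * hD K
      - D (K + 1) * x * (1 - t ^ (K + 1)) * t ^ K * qpC x t K * mul_inv_cancel₀ hc

lemma qSeries_qDifference_inv_pow (D : ℕ → ℂ)
    (hD : ∀ i, D (i + 1) * ((1 - t ^ (i + 1)) * (1 - c * t ^ i)) =
      D i * ((1 - a * t ^ i) * (1 - b * t ^ i)))
    (hab : a * b = c * w) (ht : t ≠ 0) (hc : c ≠ 0) (k : ℕ) :
    ((t ^ k)⁻¹ - 1) * w * qSeries D t (t ^ (k - 1))⁻¹ (k - 1 + 1)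
        + (c⁻¹ * (t ^ k)⁻¹ - 1) * qSeries D t (t ^ (k + 1))⁻¹ (k + 1 + 1)
        + (1 + w - w * (t ^ k)⁻¹ - c⁻¹ * (t ^ k)⁻¹) * qSeries D t (t ^ k)⁻¹ (k + 1)
      = -(c⁻¹ * (1 - a) * (1 - b) * (t ^ k)⁻¹) * qSeries D t (t ^ k)⁻¹ (k + 1) := by
  have h := qSeries_qDifference D hD hab ht hc (t ^ k)⁻¹ (k + 1)
  rw [qpC_inv_pow_eq_zero ht (lt_add_one k), mul_zero, add_zero,
    qSeries_inv_pow_of_lt D ht (by omega : k < k + 1 + 1),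
    show (t ^ k)⁻¹ * t⁻¹ = (t ^ (k + 1))⁻¹ by rw [pow_succ, mul_inv]] at h
  rw [← h]
  congr 2
  -- at `k = 0` the left factor is `0`, which absorbs the junk value of `k - 1`
  cases k with
  | zero => simp
  | succ j =>
    rw [pow_succ', mul_inv, mul_inv_cancel_left₀ ht, Nat.add_sub_cancel,
      qSeries_inv_pow_of_lt D ht (by omega : j < j + 1 + 1 + 1)]

end QDifference

lemma pow_ne_one_of_norm_lt_one {z : ℂ} (hz : ‖z‖ < 1) {j : ℕ} (hj : j ≠ 0) : z ^ j ≠ 1 := by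
  intro h
  have := congrArg norm h
  rw [norm_pow, norm_one] at this
  exact (pow_lt_one₀ (norm_nonneg z) hz hj).ne this

lemma zpow_neg_two_mul (z : ℂ) (k : ℕ) : z ^ ((-2 : ℤ) * k) = ((z ^ 2) ^ k)⁻¹ := by
  rw [zpow_mul, zpow_neg, inv_zpow, zpow_natCast, zpow_ofNat]

lemma PhiFun_eq_qSeries (q : ℝ) (n N : ℕ) (l : ℂ) (k : ℕ) :
    PhiFun q n N l k =
      qSeries (qHypCoeff ((q : ℂ) ^ (-2 * l)) ((q : ℂ) ^ (2 * (l + (N : ℂ) - 1)))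
        (((q : ℂ) ^ 2) ^ n) ((q : ℂ) ^ 2)) ((q : ℂ) ^ 2) (((q : ℂ) ^ 2) ^ k)⁻¹ (k + 1) := by
  refine sum_congr rfl fun i _ => ?_
  rw [qHypCoeff, zpow_neg_two_mul, pow_mul]
  ring

/-- `Φ_l` is a generalized eigenfunction of the radial part `□⁽⁰⁾` of the Laplace–Beltrami
operator, with eigenvalue `λ(l) = −q^{2−2n}(1−q^{-2l})(1−q^{2l+2(N−1)})/(1−q²)²`.
Here the lattice point is `x = q^{-2k}`; at `k = 0` the term `f(q²x)` carries the vanishing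
coefficient `(x−1)` (we encode `Φ_l(q^{-2(k-1)})` via truncated subtraction). -/
theorem stmt6 (q : ℝ) (hq : 0 < q) (hq1 : q < 1) (n m N : ℕ)
    (hn : 1 ≤ n) (hm : 2 ≤ m) (hN : N = n + m) (l : ℂ) (k : ℕ) :
    (q : ℂ) ^ 2 / ((1 - (q : ℂ) ^ 2) ^ 2 * (q : ℂ) ^ ((-2 : ℤ) * k)) *
        (((q : ℂ) ^ ((-2 : ℤ) * k) - 1) * (q : ℂ) ^ (2 * m - 2) * PhiFun q n N l (k - 1) +
          ((q : ℂ) ^ ((-2 : ℤ) * n) * (q : ℂ) ^ ((-2 : ℤ) * k) - 1) * PhiFun q n N l (k + 1) +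
          (1 + (q : ℂ) ^ (2 * m - 2) - (q : ℂ) ^ (2 * m - 2) * (q : ℂ) ^ ((-2 : ℤ) * k) -
              (q : ℂ) ^ ((-2 : ℤ) * n) * (q : ℂ) ^ ((-2 : ℤ) * k)) * PhiFun q n N l k)
      = -(q : ℂ) ^ ((2 : ℤ) - 2 * n) *
          (1 - (q : ℂ) ^ (-2 * l)) * (1 - (q : ℂ) ^ (2 * l + 2 * ((N : ℂ) - 1))) /
          (1 - (q : ℂ) ^ 2) ^ 2 * PhiFun q n N l k := by
  have hq0 : (q : ℂ) ≠ 0 := by exact_mod_cast hq.ne'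
  have ht : (q : ℂ) ^ 2 ≠ 0 := pow_ne_zero 2 hq0
  have ht1 : ‖(q : ℂ) ^ 2‖ < 1 := by
    rw [norm_pow, Complex.norm_real, Real.norm_of_nonneg hq.le]
    nlinarith
  have hab : (q : ℂ) ^ (-2 * l) * (q : ℂ) ^ (2 * (l + (N : ℂ) - 1)) =
      ((q : ℂ) ^ 2) ^ n * ((q : ℂ) ^ 2) ^ (m - 1) := by
    rw [← Complex.cpow_add _ _ hq0, ← pow_add, ← pow_mul,
      show -2 * l + 2 * (l + (N : ℂ) - 1) = ((2 * (n + (m - 1)) : ℕ) : ℂ) by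
        rw [hN]; push_cast [Nat.cast_sub (by omega : 1 ≤ m)]; ring,
      Complex.cpow_natCast]
  have key := qSeries_qDifference_inv_pow _
    (qHypCoeff_succ_mul (fun j => pow_ne_one_of_norm_lt_one ht1 j.succ_ne_zero)
      (fun j => by rw [← pow_add]; exact pow_ne_one_of_norm_lt_one ht1 (by omega)))
    hab ht (pow_ne_zero n ht) k
  rw [zpow_neg_two_mul, zpow_neg_two_mul, show 2 * m - 2 = 2 * (m - 1) by omega, pow_mul,
    show (2 : ℤ) - 2 * n = 2 + (-2) * n by ring, zpow_add₀ hq0, zpow_neg_two_mul,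
    show 2 * l + 2 * ((N : ℂ) - 1) = 2 * (l + (N : ℂ) - 1) by ring,
    PhiFun_eq_qSeries, PhiFun_eq_qSeries, PhiFun_eq_qSeries, key]
  field_simp
end
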